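/- arXiv:2405.13461 — 4 statements merged into one kernel-verified Lean document; each statement's English description precedes it below -/
import Mathlib

section
/- For primes p, q, p', q' (natural numbers), there exist natural numbers k, ℓ, o, u with p = k*o, q = ℓ*o, p' = k*u, q' = ℓ*u if and only if (p = q and p' = q') or (p = p' and q = q'). -/
theorem stmt7 (p q p' q' : ℕ) (hp : p.Prime) (hq : q.Prime) (hp' : p'.Prime) (hq' : q'.Prime) :
    (∃ k l o u : ℕ, p = k * o ∧ q = l * o ∧ p' = k * u ∧ q' = l * u) ↔
      ((p = q ∧ p' = q') ∨ (p = p' ∧ q = q')) := by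
  constructor
  · rintro ⟨k, l, o, u, h1, h2, h3, h4⟩
    rcases Nat.prime_mul_iff.mp (h1 ▸ hp) with ⟨hk, ho⟩ | ⟨ho, hk⟩
    · -- o = 1, so p = k, q = l
      subst ho
      simp only [mul_one] at h1 h2
      subst h1; subst h2
      rcases Nat.prime_mul_iff.mp (h3 ▸ hp') with ⟨_, hu⟩ | ⟨hu, hk1⟩
      · right; subst hu; simp_all
      · exact absurd hk1 hp.ne_one
    · -- k = 1, p = o
      subst hk
      simp only [one_mul] at h1 h3
      subst h1; subst h3
      rcases Nat.prime_mul_iff.mp (h2 ▸ hq) with ⟨hl, hp1⟩ | ⟨_, hl⟩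
      · exact absurd hp1 hp.ne_one
      · left; subst hl; simp_all
  · rintro (⟨h1, h2⟩ | ⟨h1, h2⟩)
    · exact ⟨1, 1, p, p', by simp [h1, h2]⟩
    · exact ⟨p, q, 1, 1, by simp [h1, h2]⟩
end

section
/- For primes p, q and natural numbers c, d (all positive), there exist natural numbers k, ℓ, o, u with p = k*o, q = ℓ*o, c = k*u, d = ℓ*u if and only if (p = q and c = d) or (p ≠ q and there exists u with c = p*u and d = q*u). -/
theorem stmt8 (p q c d : ℕ) (hp : p.Prime) (hq : q.Prime) (hc : 0 < c) (hd : 0 < d) :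
    (∃ k l o u : ℕ, p = k * o ∧ q = l * o ∧ c = k * u ∧ d = l * u) ↔
      ((p = q ∧ c = d) ∨ (p ≠ q ∧ ∃ u : ℕ, c = p * u ∧ d = q * u)) := by
  constructor
  · rintro ⟨k, l, o, u, hk, hl, hcu, hdu⟩
    have ho : o = 1 ∨ o = p := hp.eq_one_or_self_of_dvd o ⟨k, by rw [hk, Nat.mul_comm]⟩
    rcases ho with ho | ho
    · subst ho
      simp only [Nat.mul_one] at hk hl
      subst hk; subst hl
      by_cases hpq : p = q
      · exact Or.inl ⟨hpq, by rw [hcu, hdu, hpq]⟩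
      · exact Or.inr ⟨hpq, u, hcu, hdu⟩
    · -- o = p, so k * p = p hence k = 1
      have hk1 : k = 1 := by
        have h1 : k * p = 1 * p := by rw [Nat.one_mul, ← ho]; omega
        exact Nat.eq_of_mul_eq_mul_right hp.pos h1
      subst hk1
      simp only [Nat.one_mul] at hcu
      have hqp : q = p := by
        rcases hq.eq_one_or_self_of_dvd o ⟨l, by rw [hl, Nat.mul_comm]⟩ with h | h
        · exact absurd (ho ▸ h) hp.ne_one
        · rw [← h, ho]
      have hl1 : l = 1 := by
        have h1 : l * q = 1 * q := by rw [Nat.one_mul]; rw [← hqp] at ho; rw [← ho]; omega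
        exact Nat.eq_of_mul_eq_mul_right hq.pos h1
      subst hl1
      simp only [Nat.one_mul] at hdu
      exact Or.inl ⟨hqp.symm, by rw [hcu, hdu]⟩
  · rintro (⟨hpq, hcd⟩ | ⟨hpq, u, hcu, hdu⟩)
    · exact ⟨1, 1, p, c, by simp, by simp [hpq], by simp, by simp [hcd]⟩
    · exact ⟨p, q, 1, u, by simp, by simp, hcu, hdu⟩
end

section
/- Define the monolinear word proportion relation on lists over an alphabet A by w:x::y:z iff there exist lists a1, a2, a3, b1, b2, b3 with w = a1 ++ a2 ++ a3, x = b1 ++ a2 ++ b3, y = a1 ++ b2 ++ a3, z = b1 ++ b2 ++ b3. Then this relation satisfies determinism: if w:w::w:z holds then z = w. -/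
def MonoWordProp {A : Type*} (w x y z : List A) : Prop :=
  ∃ a1 a2 a3 b1 b2 b3 : List A,
    w = a1 ++ a2 ++ a3 ∧ x = b1 ++ a2 ++ b3 ∧ y = a1 ++ b2 ++ a3 ∧ z = b1 ++ b2 ++ b3

theorem stmt10 {A : Type*} (w z : List A) (h : MonoWordProp w w w z) : z = w := by
  obtain ⟨a1, a2, a3, b1, b2, b3, h1, h2, h3, h4⟩ := h
  have hb : a2 = b2 := by
    have := h1.symm.trans h3
    simp only [List.append_assoc] at this
    exact List.append_cancel_right (List.append_cancel_left this)
  rw [h4, ← hb, ← h2]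
end

section
/- Define the monolinear word proportion relation on lists by w:x::y:z iff there exist lists a1, a2, a3, b1, b2, b3 with w = a1 ++ a2 ++ a3, x = b1 ++ a2 ++ b3, y = a1 ++ b2 ++ a3, z = b1 ++ b2 ++ b3. Over an alphabet with two distinct letters a and b, the words [a,b], [b,a], [b,a], [a,b] do NOT stand in this relation; i.e., the proportion ab:ba::ba:ab fails in the monolinear word setting. -/
theorem stmt14 {A : Type*} (a b : A) (hab : a ≠ b) :
    ¬ MonoWordProp [a, b] [b, a] [b, a] [a, b] := by
  rintro ⟨a1, a2, a3, b1, b2, b3, h1, h2, h3, h4⟩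
  have l1 := congrArg List.length h1
  have l2 := congrArg List.length h2
  have l3 := congrArg List.length h3
  simp [List.length_append] at l1 l2 l3
  have h02 : a2.length = 0 ∨ a2.length = 1 ∨ a2.length = 2 := by omega
  rcases h02 with h0 | h1' | h2'
  · -- a2 = [], b2 = []
    have ha2 : a2 = [] := List.length_eq_zero_iff.mp h0
    have hb2 : b2 = [] := List.length_eq_zero_iff.mp (by omega)
    subst ha2 hb2
    simp at h1 h3
    have := h1.trans h3.symm
    simp at this
    exact hab this.1
  · -- a2 = [c], b2 = [d]
    obtain ⟨c, hc⟩ := List.length_eq_one_iff.mp h1'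
    obtain ⟨d, hd⟩ := List.length_eq_one_iff.mp (show b2.length = 1 by omega)
    subst hc hd
    have h01 : a1.length = 0 ∨ a1.length = 1 := by omega
    rcases h01 with hA | hA
    · have ha1 : a1 = [] := List.length_eq_zero_iff.mp hA
      obtain ⟨e, he⟩ := List.length_eq_one_iff.mp (show a3.length = 1 by omega)
      subst ha1 he
      simp at h1 h3
      exact hab (h3.2.trans h1.2.symm)
    · obtain ⟨e, he⟩ := List.length_eq_one_iff.mp hA
      have ha3 : a3 = [] := List.length_eq_zero_iff.mp (by omega)
      subst he ha3
      simp at h1 h3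
      exact hab (h1.1.trans h3.1.symm)
  · -- a2 length 2, everything else nil
    have ha1 : a1 = [] := List.length_eq_zero_iff.mp (by omega)
    have ha3 : a3 = [] := List.length_eq_zero_iff.mp (by omega)
    have hb1 : b1 = [] := List.length_eq_zero_iff.mp (by omega)
    have hb3 : b3 = [] := List.length_eq_zero_iff.mp (by omega)
    subst ha1 ha3 hb1 hb3
    simp at h1 h2
    have := h1.trans h2.symm
    simp at this
    exact hab this.1
end
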